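/- Let α ∈ (0, 1/2) and Θ₀ ∈ ℝ^N. Let (εₙ) be a sequence of positive numbers with εₙ → 0, and for each n let Θⁿ : [0, ∞) → ℝ^N be a global classical solution of the regularized Kuramoto system with kernel h_{εₙ} and Θⁿ(0) = Θ₀. Suppose Θ : [0, ∞) → ℝ^N is continuously differentiable and that for every T > 0 one has Θⁿ → Θ and Θ̇ⁿ → Θ̇ uniformly on [0, T]. Then Θ is a global classical solution of the singular weighted Kuramoto system (with kernel h) satisfying Θ(0) = Θ₀. -/

import Mathlib

open Real Set Filter Topology MeasureTheory

/-- The orthodromic distance of `θ` to `0` on the circle: `|θ̄|` where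
`θ̄ ≡ θ (mod 2π)`, `θ̄ ∈ (−π, π]`. -/
noncomputable def orthoDist (θ : ℝ) : ℝ := |θ - 2 * Real.pi * (round (θ / (2 * Real.pi)) : ℝ)|

/-- The singular interaction kernel `h(θ) = sin θ / |θ|_o^{2α}` (equal to `0` on `2πℤ`,
by the junk value convention `x / 0 = 0`). -/
noncomputable def hker (α θ : ℝ) : ℝ := Real.sin θ / orthoDist θ ^ (2 * α)
/-- The Kuramoto vector field `H_i(Θ) = Ω_i + (K/N) ∑_j h(θ_j − θ_i)`. -/
noncomputable def Hvec (N : ℕ) (K α : ℝ) (Ω : Fin N → ℝ)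
    (Θ : EuclideanSpace ℝ (Fin N)) : EuclideanSpace ℝ (Fin N) :=
  WithLp.toLp 2 (fun i => Ω i + (K / (N : ℝ)) * ∑ j, hker α (Θ j - Θ i))
/-- The regularized interaction kernel `h_ε(θ) = sin θ / (ε² + |θ|_o²)^α`. -/
noncomputable def hkerEps (α ε θ : ℝ) : ℝ := Real.sin θ / (ε ^ 2 + orthoDist θ ^ 2) ^ α

/-- The regularized Kuramoto vector field. -/
noncomputable def HvecEps (N : ℕ) (K α ε : ℝ) (Ω : Fin N → ℝ)
    (Θ : EuclideanSpace ℝ (Fin N)) : EuclideanSpace ℝ (Fin N) :=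
  WithLp.toLp 2 (fun i => Ω i + (K / (N : ℝ)) * ∑ j, hkerEps α ε (Θ j - Θ i))

lemma orthoDist_le (θ : ℝ) (k : ℤ) : orthoDist θ ≤ |θ - 2 * Real.pi * k| := by
  have hpi : (0:ℝ) < 2 * Real.pi := by positivity
  set r : ℤ := round (θ / (2 * Real.pi)) with hr
  have key : ∀ m : ℤ, |θ - 2 * Real.pi * m| = 2 * Real.pi * |θ / (2 * Real.pi) - m| := by
    intro m
    have hm : θ - 2 * Real.pi * m = 2 * Real.pi * (θ / (2 * Real.pi) - m) := by
      field_simp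
    rw [hm, abs_mul, abs_of_pos hpi]
  have hround : |θ / (2 * Real.pi) - r| ≤ 1/2 := abs_sub_round _
  rcases eq_or_ne k r with rfl | hk
  · exact le_refl _
  · have h1 : (1:ℝ) ≤ |(k:ℝ) - r| := by
      have : (1:ℤ) ≤ |k - r| := Int.one_le_abs (sub_ne_zero.mpr hk)
      have h := (@Int.cast_le ℝ _ _ _).mpr this
      rw [Int.cast_abs, Int.cast_sub] at h
      simpa using h
    have h2 : (1:ℝ)/2 ≤ |θ / (2 * Real.pi) - k| := by
      have := abs_sub_abs_le_abs_sub ((k:ℝ) - r) (θ / (2 * Real.pi) - r)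
      have h3 : |((k:ℝ) - r) - (θ / (2 * Real.pi) - r)| = |θ / (2 * Real.pi) - k| := by
        rw [abs_sub_comm]; ring_nf
      linarith [abs_sub_abs_le_abs_sub ((k:ℝ) - r) (θ / (2 * Real.pi) - r), h3 ▸ this]
    have : orthoDist θ = 2 * Real.pi * |θ / (2 * Real.pi) - r| := key r
    rw [this, key k]
    nlinarith

lemma orthoDist_nonneg (θ : ℝ) : 0 ≤ orthoDist θ := abs_nonneg _

lemma orthoDist_continuous : Continuous orthoDist := by
  have hlip : ∀ a b : ℝ, orthoDist a ≤ orthoDist b + |a - b| := by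
    intro a b
    calc orthoDist a ≤ |a - 2 * Real.pi * (round (b / (2 * Real.pi)) : ℤ)| :=
          orthoDist_le a _
      _ ≤ |a - b| + |b - 2 * Real.pi * (round (b / (2 * Real.pi)) : ℤ)| := by
          have := abs_sub_le a b (2 * Real.pi * (round (b / (2 * Real.pi)) : ℤ))
          simpa using this
      _ = orthoDist b + |a - b| := by rw [orthoDist]; ring
  have : LipschitzWith 1 orthoDist := by
    apply LipschitzWith.of_dist_le_mul
    intro a b
    rw [Real.dist_eq, Real.dist_eq, NNReal.coe_one, one_mul, abs_sub_le_iff]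
    constructor
    · linarith [hlip a b]
    · have h := hlip b a
      rw [abs_sub_comm] at h
      linarith
  exact this.continuous

lemma abs_sin_le_orthoDist (θ : ℝ) : |Real.sin θ| ≤ orthoDist θ := by
  have : Real.sin θ = Real.sin (θ - (round (θ / (2 * Real.pi)) : ℤ) * (2 * Real.pi)) := by
    rw [Real.sin_sub_int_mul_two_pi]
  rw [this, orthoDist]
  calc |Real.sin (θ - (round (θ / (2 * Real.pi)) : ℤ) * (2 * Real.pi))|
      ≤ |θ - (round (θ / (2 * Real.pi)) : ℤ) * (2 * Real.pi)| := Real.abs_sin_le_abs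
    _ = |θ - 2 * Real.pi * (round (θ / (2 * Real.pi)) : ℤ)| := by ring_nf

lemma orthoDist_eq_zero_sin {θ : ℝ} (h : orthoDist θ = 0) : Real.sin θ = 0 := by
  have := abs_sin_le_orthoDist θ
  rw [h] at this
  have := abs_nonneg (Real.sin θ)
  have : |Real.sin θ| = 0 := le_antisymm (by linarith [abs_sin_le_orthoDist θ, h]) this
  exact abs_eq_zero.mp this


lemma hkerEps_abs_le {α : ℝ} (hα0 : 0 < α) (ε θ : ℝ) :
    |hkerEps α ε θ| ≤ orthoDist θ ^ (1 - 2 * α) := by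
  set d := orthoDist θ with hd
  rcases eq_or_lt_of_le (orthoDist_nonneg θ) with h0 | hdpos
  · have hs : Real.sin θ = 0 := orthoDist_eq_zero_sin h0.symm
    rw [hkerEps, hs, zero_div, abs_zero]
    positivity
  · have hden : (d ^ 2 : ℝ) ^ α ≤ (ε ^ 2 + d ^ 2) ^ α :=
      Real.rpow_le_rpow (by positivity) (by nlinarith [sq_nonneg ε]) hα0.le
    have hdenpos : (0:ℝ) < (d ^ 2) ^ α := Real.rpow_pos_of_pos (by positivity) α
    have h1 : |hkerEps α ε θ| ≤ |Real.sin θ| / (d ^ 2) ^ α := by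
      rw [hkerEps, abs_div]
      have hpos2 : (0:ℝ) < (ε ^ 2 + d ^ 2) ^ α := Real.rpow_pos_of_pos (by nlinarith) α
      rw [abs_of_pos hpos2]
      gcongr

    have h2 : |Real.sin θ| / (d ^ 2) ^ α ≤ d / (d ^ 2) ^ α := by
      gcongr
      exact abs_sin_le_orthoDist θ
    have h3 : d / (d ^ 2) ^ α = d ^ (1 - 2 * α) := by
      rw [Real.rpow_sub hdpos, Real.rpow_one]
      congr 1
      rw [← Real.rpow_natCast d 2, ← Real.rpow_mul hdpos.le]
      norm_num
    calc |hkerEps α ε θ| ≤ |Real.sin θ| / (d ^ 2) ^ α := h1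
      _ ≤ d / (d ^ 2) ^ α := h2
      _ = d ^ (1 - 2 * α) := h3

lemma hkerEps_tendsto {α : ℝ} (hα : α ∈ Set.Ioo (0:ℝ) (1/2)) (ε x : ℕ → ℝ) (θ : ℝ)
    (hε : Filter.Tendsto ε Filter.atTop (nhds 0))
    (hx : Filter.Tendsto x Filter.atTop (nhds θ)) :
    Filter.Tendsto (fun n => hkerEps α (ε n) (x n)) Filter.atTop (nhds (hker α θ)) := by
  obtain ⟨hα0, hα2⟩ := hα
  have hdcont : Filter.Tendsto (fun n => orthoDist (x n)) Filter.atTop (nhds (orthoDist θ)) :=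
    (orthoDist_continuous.tendsto θ).comp hx
  rcases eq_or_lt_of_le (orthoDist_nonneg θ) with h0 | hdpos
  · -- singular case: limit is 0
    have hker0 : hker α θ = 0 := by
      rw [hker, ← h0, Real.zero_rpow (by positivity), div_zero]
    rw [hker0]
    apply squeeze_zero_norm (fun n => hkerEps_abs_le hα0 (ε n) (x n))
    have hcont : ContinuousAt (fun y : ℝ => y ^ (1 - 2*α)) 0 :=
      Real.continuousAt_rpow_const 0 (1 - 2*α) (Or.inr (by linarith))
    have := hcont.tendsto.comp (h0 ▸ hdcont)
    simpa [Function.comp_def, Real.zero_rpow (show (1:ℝ) - 2*α ≠ 0 by linarith)] using this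
  · -- regular case
    have hsin : Filter.Tendsto (fun n => Real.sin (x n)) Filter.atTop (nhds (Real.sin θ)) :=
      (Real.continuous_sin.tendsto θ).comp hx
    have hden : Filter.Tendsto (fun n => (ε n) ^ 2 + orthoDist (x n) ^ 2) Filter.atTop
        (nhds (orthoDist θ ^ 2)) := by
      have := ((hε.pow 2).add (hdcont.pow 2))
      simpa using this
    have hd2pos : (0:ℝ) < orthoDist θ ^ 2 := by positivity
    have hrpow : Filter.Tendsto (fun n => ((ε n) ^ 2 + orthoDist (x n) ^ 2) ^ α)
        Filter.atTop (nhds ((orthoDist θ ^ 2) ^ α)) :=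
      ((Real.continuousAt_rpow_const _ α (Or.inl hd2pos.ne')).tendsto).comp hden
    have hne : (orthoDist θ ^ 2 : ℝ) ^ α ≠ 0 := (Real.rpow_pos_of_pos hd2pos α).ne'
    have := hsin.div hrpow hne
    have heq : Real.sin θ / (orthoDist θ ^ 2) ^ α = hker α θ := by
      rw [hker]
      congr 1
      rw [← Real.rpow_natCast (orthoDist θ) 2, ← Real.rpow_mul hdpos.le]
      norm_num
    simpa [Pi.div_def, hkerEps, heq] using this


/-- in the subcritical regime `α ∈ (0, 1/2)`, a `C¹` limit of solutions of the
regularized systems (phases and frequencies converging uniformly on compact time intervals as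
`εₙ → 0`) is a global classical solution of the singular weighted Kuramoto system. -/
theorem statement9 (N : ℕ) (K α : ℝ) (hK : 0 < K) (hα : α ∈ Ioo (0 : ℝ) (1 / 2))
    (Ω : Fin N → ℝ) (Θ₀ : EuclideanSpace ℝ (Fin N))
    (εn : ℕ → ℝ) (hεn : ∀ n, 0 < εn n) (hεn0 : Tendsto εn atTop (nhds 0))
    (Θn : ℕ → ℝ → EuclideanSpace ℝ (Fin N))
    (hinit : ∀ n, Θn n 0 = Θ₀)
    (hsoln : ∀ n, ∀ t ∈ Ici (0 : ℝ), ∀ i, HasDerivWithinAt (fun s => Θn n s i)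
      (HvecEps N K α (εn n) Ω (Θn n t) i) (Ici (0 : ℝ)) t)
    (Θ : ℝ → EuclideanSpace ℝ (Fin N)) (w : ℝ → EuclideanSpace ℝ (Fin N))
    (hdiff : ∀ t ∈ Ici (0 : ℝ), ∀ i,
      HasDerivWithinAt (fun s => Θ s i) (w t i) (Ici (0 : ℝ)) t)
    (hwcont : ContinuousOn w (Ici (0 : ℝ)))
    (hunif : ∀ T : ℝ, 0 < T → TendstoUniformlyOn (fun n => Θn n) Θ atTop (Icc 0 T))
    (hunif' : ∀ T : ℝ, 0 < T → TendstoUniformlyOn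
      (fun n t => HvecEps N K α (εn n) Ω (Θn n t)) w atTop (Icc 0 T)) :
    Θ 0 = Θ₀ ∧ ∀ t ∈ Ici (0 : ℝ), ∀ i, HasDerivWithinAt (fun s => Θ s i)
      (Hvec N K α Ω (Θ t) i) (Ici (0 : ℝ)) t := by

  have hpoint : ∀ t ∈ Ici (0:ℝ), Tendsto (fun n => Θn n t) atTop (nhds (Θ t)) := by
    intro t ht
    have ht' : (0:ℝ) ≤ t := ht
    exact (hunif (t+1) (by linarith)).tendsto_at ⟨ht', by linarith⟩
  have hinit0 : Θ 0 = Θ₀ := by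
    have h1 := hpoint 0 (Set.self_mem_Ici)
    have h2 : Tendsto (fun n => Θn n 0) atTop (nhds Θ₀) := by
      simp only [hinit]; exact tendsto_const_nhds
    exact tendsto_nhds_unique h1 h2
  refine ⟨hinit0, fun t ht i => ?_⟩
  have ht' : (0:ℝ) ≤ t := ht
  have hcomp : ∀ (j : Fin N), Tendsto (fun n => Θn n t j) atTop (nhds (Θ t j)) := by
    intro j
    exact (((continuous_apply j).comp (PiLp.continuous_ofLp ..)).tendsto _).comp (hpoint t ht)
  have h2 : Tendsto (fun n => HvecEps N K α (εn n) Ω (Θn n t) i) atTop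
      (nhds (Hvec N K α Ω (Θ t) i)) := by
    simp only [HvecEps, Hvec, PiLp.toLp_apply]
    apply tendsto_const_nhds.add
    apply Tendsto.const_mul
    apply tendsto_finset_sum
    intro j _
    exact hkerEps_tendsto hα εn (fun n => Θn n t j - Θn n t i) _ hεn0
      ((hcomp j).sub (hcomp i))
  have h1 : Tendsto (fun n => HvecEps N K α (εn n) Ω (Θn n t) i) atTop
      (nhds (w t i)) := by
    have := (hunif' (t+1) (by linarith)).tendsto_at (x := t) ⟨ht', by linarith⟩
    exact (((continuous_apply i).comp (PiLp.continuous_ofLp ..)).tendsto _).comp this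
  have hwt : w t i = Hvec N K α Ω (Θ t) i := tendsto_nhds_unique h1 h2
  exact hwt ▸ hdiff t ht i
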